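/- arXiv:2004.00669 — 5 statements merged into one kernel-verified Lean document; each statement's English description precedes it below -/
import Mathlib

section
/- Fix θ ∈ (0, 1/4). The function W(a,b,q) = θ(1−q) − b² + b − 1/3 − (a² − b² − θ(2q−1))²/(4(a−b)), defined for 0 ≤ a < b ≤ 1 and q ∈ [0,1], satisfies W(a,b,q) ≤ (48θ² + 24θ − 1)/48, with equality at (a,b,q) = (1/4+θ, 3/4+θ, 1) and at (1/4−θ, 3/4−θ, 0). -/
/-!
Write `x` for the indifferent individual and `d = b - a`. The indifference condition turns the
last term of `W` into `-d x²` and gives `t := θ (2q - 1) = d (2x - 2b + d)`. As `t² ≤ θ²`, the bound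
follows from `t² + t/2 + b² - b + 5/16 - d x² ≥ 0`, and `16 (4d² + 1)` times this polynomial is a
square plus `(2d - 1)² (16 d x (1 - x) + (2d - 1)²)`, which is nonnegative for `d ≥ 0`, `x ∈ [0, 1]`.
-/

lemma sq_div_four_mul_eq {K : Type*} [Field K] [CharZero K] {c : K} (hc : c ≠ 0) (N : K) :
    N ^ 2 / (4 * c) = c * (N / (2 * c)) ^ 2 := by
  field_simp
  ring

lemma welfare_gap_sos (d b x : ℝ) :
    16 * (4 * d ^ 2 + 1) *
        ((d * (2 * x - 2 * b + d)) ^ 2 + d * (2 * x - 2 * b + d) / 2 + b ^ 2 - b + 5 / 16 - d * x ^ 2)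
      = 4 * (8 * d ^ 2 * x - (4 * d ^ 2 + 1) * (2 * b - 1) + d * (2 * d - 1) ^ 2) ^ 2
        + (2 * d - 1) ^ 2 * (16 * d * x * (1 - x) + (2 * d - 1) ^ 2) := by
  ring

lemma welfare_gap_nonneg {d x : ℝ} (b : ℝ) (hd : 0 ≤ d) (hx : x ∈ Set.Icc (0 : ℝ) 1) :
    0 ≤ (d * (2 * x - 2 * b + d)) ^ 2 + d * (2 * x - 2 * b + d) / 2 + b ^ 2 - b + 5 / 16
      - d * x ^ 2 := by
  have hdx : 0 ≤ d * x * (1 - x) := mul_nonneg (mul_nonneg hd hx.1) (sub_nonneg.2 hx.2)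
  have hsos : 0 ≤ 16 * (4 * d ^ 2 + 1) *
      ((d * (2 * x - 2 * b + d)) ^ 2 + d * (2 * x - 2 * b + d) / 2 + b ^ 2 - b + 5 / 16
        - d * x ^ 2) := by
    rw [welfare_gap_sos]
    have : 0 ≤ 16 * d * x * (1 - x) + (2 * d - 1) ^ 2 := by nlinarith [sq_nonneg (2 * d - 1)]
    positivity
  exact nonneg_of_mul_nonneg_right (by linarith) (by positivity : (0 : ℝ) < 16 * (4 * d ^ 2 + 1))

theorem asymmetric_optima_general (θ : ℝ) :
    (∀ a b q : ℝ, 0 ≤ a → a < b → b ≤ 1 → q ∈ Set.Icc (0:ℝ) 1 →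
      (a^2 - b^2 - θ*(2*q-1)) / (2*(a-b)) ∈ Set.Icc (0:ℝ) 1 →
      θ*(1-q) - b^2 + b - 1/3 - (a^2 - b^2 - θ*(2*q-1))^2 / (4*(a-b)) ≤
        (48*θ^2 + 24*θ - 1)/48) ∧
    θ*(1-1) - (3/4+θ)^2 + (3/4+θ) - 1/3 -
        ((1/4+θ)^2 - (3/4+θ)^2 - θ*(2*1-1))^2 / (4*((1/4+θ)-(3/4+θ))) =
      (48*θ^2 + 24*θ - 1)/48 ∧
    θ*(1-0) - (3/4-θ)^2 + (3/4-θ) - 1/3 -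
        ((1/4-θ)^2 - (3/4-θ)^2 - θ*(2*0-1))^2 / (4*((1/4-θ)-(3/4-θ))) =
      (48*θ^2 + 24*θ - 1)/48 := by
  refine ⟨fun a b q _ hab _ hq hx => ?_, by ring, by ring⟩
  have hc : a - b ≠ 0 := sub_ne_zero.2 hab.ne
  set x := (a^2 - b^2 - θ*(2*q-1)) / (2*(a-b)) with hx_def
  have hindiff : a^2 - b^2 - θ*(2*q-1) = 2*(a-b)*x := by
    rw [hx_def]; field_simp
  have ht : θ*(2*q-1) = (b-a)*(2*x - 2*b + (b-a)) := by linear_combination -hindiff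
  have ht_sq : (θ*(2*q-1))^2 ≤ θ^2 := by
    nlinarith [mul_nonneg hq.1 (sub_nonneg.2 hq.2), sq_nonneg θ]
  have hgap := welfare_gap_nonneg b (sub_nonneg.2 hab.le) hx
  rw [← ht] at hgap
  rw [sq_div_four_mul_eq hc]
  linarith

/-- For θ ∈ (0,1/4), W(a,b,q) ≤ (48θ²+24θ−1)/48 on the feasible set (with the
indifferent individual in [0,1]), with equality at (1/4+θ, 3/4+θ, 1) and
(1/4−θ, 3/4−θ, 0). -/
theorem asymmetric_optima (θ : ℝ) (hθ : θ ∈ Set.Ioo (0:ℝ) (1/4)) :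
    (∀ a b q : ℝ, 0 ≤ a → a < b → b ≤ 1 → q ∈ Set.Icc (0:ℝ) 1 →
      (a^2 - b^2 - θ*(2*q-1)) / (2*(a-b)) ∈ Set.Icc (0:ℝ) 1 →
      θ*(1-q) - b^2 + b - 1/3 - (a^2 - b^2 - θ*(2*q-1))^2 / (4*(a-b)) ≤
        (48*θ^2 + 24*θ - 1)/48) ∧
    θ*(1-1) - (3/4+θ)^2 + (3/4+θ) - 1/3 -
        ((1/4+θ)^2 - (3/4+θ)^2 - θ*(2*1-1))^2 / (4*((1/4+θ)-(3/4+θ))) =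
      (48*θ^2 + 24*θ - 1)/48 ∧
    θ*(1-0) - (3/4-θ)^2 + (3/4-θ) - 1/3 -
        ((1/4-θ)^2 - (3/4-θ)^2 - θ*(2*0-1))^2 / (4*((1/4-θ)-(3/4-θ))) =
      (48*θ^2 + 24*θ - 1)/48 :=
  asymmetric_optima_general θ
end

section
/- For θ ≥ 1/4, for every a ∈ [0,1], every b ∈ (a,1], and every q ∈ [0,1], the welfare W(a,b,q) = θ(1−q) − b² + b − 1/3 − (a² − b² − θ(2q−1))²/(4(a−b)) (valid when the indifferent individual lies in [0,1]) satisfies W(a,b,q) ≤ θ − 1/12, the welfare of a single facility of quality 1 at 1/2 serving everyone. -/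
/-!
Write `u = θ q`, `v = θ (1 - q)` for the two qualities and `x` for the indifferent individual,
so that `u - (x - a)² = v - (x - b)²`. The welfare loss against the single facility is
`u + (b - 1/2)² - (b - a) x²`. Along the indifference relation `z = (b - a) x - u` is fixed,
`2 z = b² - a² - θ`, and `(b - a)` times the loss equals
`((b - a)(b - 1/2)² - z²) + u (u + (b - a)(1 - 2x))`.
For `z ≥ 0` the first term (the loss at `q = 0`) is nonnegative because `θ ≥ 1/4`, and the second
is nonnegative when `u ≥ (b - a)(2x - 1)`; for `z ≤ 0` one has `u ≥ (b - a) x ≥ (b - a) x²`.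
The reflection `i ↦ 1 - i` of the line, which swaps the facilities, covers the remaining case
`u < (b - a)(2x - 1)`.
-/

theorem sq_sub_quarter_le {a b : ℝ} (hab : a ≤ b) (hb : b ≤ 1)
    (h : 1/4 ≤ b^2 - a^2) : (b^2 - a^2 - 1/4)^2 ≤ 4*(b-a)*(b-1/2)^2 := by
  nlinarith [sq_nonneg (b-1/2-a), mul_nonneg (sub_nonneg.2 hab) (sub_nonneg.2 hb)]

theorem sq_sub_le_of_quarter_le {a b t : ℝ} (hab : a ≤ b) (hb : b ≤ 1)
    (ht : 1/4 ≤ t) (htb : t ≤ b^2 - a^2) : (b^2 - a^2 - t)^2 ≤ 4*(b-a)*(b-1/2)^2 :=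
  (pow_le_pow_left₀ (by linarith) (by linarith) 2).trans (sq_sub_quarter_le hab hb (ht.trans htb))

section Indifference

variable {a b x u v : ℝ}

theorem mul_sq_le_of_indifferent_of_le (hab : a < b) (hb : b ≤ 1)
    (hx0 : 0 ≤ x) (hx1 : x ≤ 1) (hu : 0 ≤ u) (huv : 1/4 ≤ u + v)
    (hind : u - (x-a)^2 = v - (x-b)^2) (hle : (b-a)*(2*x-1) ≤ u) :
    (b-a)*x^2 ≤ u + (b-1/2)^2 := by
  have hd : 0 < b - a := sub_pos.2 hab
  rcases le_or_gt ((b-a)*x) u with hz | hz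
  · nlinarith [mul_nonneg hd.le (mul_nonneg hx0 (sub_nonneg.2 hx1))]
  · have hz2 : 2*((b-a)*x - u) = b^2 - a^2 - (u+v) := by linear_combination -hind
    have hsq : ((b-a)*x - u)^2 ≤ (b-a)*(b-1/2)^2 := by
      have h := sq_sub_le_of_quarter_le hab.le hb huv (by linarith)
      rw [← hz2] at h
      linarith
    have hloss : (b-a)*(u + (b-1/2)^2 - (b-a)*x^2)
        = ((b-a)*(b-1/2)^2 - ((b-a)*x - u)^2) + u*(u + (b-a)*(1-2*x)) := by ring
    have hprod : 0 ≤ u*(u + (b-a)*(1-2*x)) := mul_nonneg hu (by linarith)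
    have hmul : 0 ≤ (b-a)*(u + (b-1/2)^2 - (b-a)*x^2) := by rw [hloss]; linarith
    linarith [nonneg_of_mul_nonneg_right hmul hd]

theorem mul_sq_le_of_indifferent (ha : 0 ≤ a) (hab : a < b) (hb : b ≤ 1)
    (hx0 : 0 ≤ x) (hx1 : x ≤ 1) (hu : 0 ≤ u) (hv : 0 ≤ v) (huv : 1/4 ≤ u + v)
    (hind : u - (x-a)^2 = v - (x-b)^2) :
    (b-a)*x^2 ≤ u + (b-1/2)^2 := by
  rcases le_or_gt ((b-a)*(2*x-1)) u with hle | hlt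
  · exact mul_sq_le_of_indifferent_of_le hab hb hx0 hx1 hu huv hind hle
  · have hrefl := mul_sq_le_of_indifferent_of_le (a := 1-b) (b := 1-a) (x := 1-x) (u := v) (v := u)
      (by linarith) (by linarith) (by linarith) (by linarith) hv (by linarith)
      (by linear_combination -hind) (by linarith)
    linarith [hrefl, hind]

end Indifference

/-- For θ ≥ 1/4, the two-facility welfare (when the indifferent individual lies
in [0,1]) never exceeds θ − 1/12, the single-facility welfare. -/
theorem single_facility_dominates (θ : ℝ) (hθ : 1/4 ≤ θ) :
    ∀ a b q : ℝ, a ∈ Set.Icc (0:ℝ) 1 → b ∈ Set.Ioc a 1 → q ∈ Set.Icc (0:ℝ) 1 →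
      (a^2 - b^2 - θ*(2*q-1)) / (2*(a-b)) ∈ Set.Icc (0:ℝ) 1 →
      θ*(1-q) - b^2 + b - 1/3 - (a^2 - b^2 - θ*(2*q-1))^2 / (4*(a-b)) ≤ θ - 1/12 := by
  rintro a b q ⟨ha0, -⟩ ⟨hab, hb1⟩ ⟨hq0, hq1⟩ ⟨hx0, hx1⟩
  have hne : a - b ≠ 0 := sub_ne_zero.2 hab.ne
  set x := (a^2 - b^2 - θ*(2*q-1)) / (2*(a-b))
  have hN : a^2 - b^2 - θ*(2*q-1) = 2*(a-b)*x :=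
    (mul_div_cancel₀ _ (mul_ne_zero two_ne_zero hne)).symm
  have hloss := mul_sq_le_of_indifferent (u := θ*q) (v := θ*(1-q)) ha0 hab hb1 hx0 hx1
    (by positivity) (mul_nonneg (by linarith) (by linarith)) (by linarith)
    (by linear_combination -hN)
  have hterm : (2*(a-b)*x)^2 / (4*(a-b)) = (a-b)*x^2 := by field_simp; ring
  rw [hN, hterm]
  linarith
end

section
/- Let (a*, b*, q*) with 0 ≤ a* ≤ b* ≤ 1, q* ∈ [0,1] maximize the social welfare W(a,b,q) = ∫₀^{ĵ} (θq − (i−a)²) di + ∫_{ĵ}^1 (θ(1−q) − (i−b)²) di where ĵ = ĵ(a,b,q) is the indifferent individual. If ĵ(a*,b*,q*) ∈ (0,1), then a* > 0, b* < 1, and a* < b*. -/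
/-!
Write `V(a, b, q, j)` for the welfare when the individuals in `[0, j]` use the facility at `a` and
the others the one at `b`, so that `W(a, b, q) = V(a, b, q, ĵ)`. For `a < b`, `V` is a concave
quadratic in `j` with vertex at the unclipped `ĵ`, hence `ĵ` is the best split point in `[0, 1]`
and `W(a, b, q) ≥ V(a, b, q, j)` for every `j ∈ [0, 1]`.

At the optimum, `a* = b*` would force `ĵ ∈ {0, 1}`. If `a* = 0`, freeze the split at `j = ĵ*` and
move `a` into `(0, j)`: this strictly raises `V`, hence `W`, contradicting optimality; `b* = 1` is
the mirror image.
-/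

open MeasureTheory intervalIntegral

/-- The (clipped) indifferent individual. -/
noncomputable def jhat (θ a b q : ℝ) : ℝ :=
  if a = b then (if 1/2 < q then 1 else 0)
  else min 1 (max 0 ((a^2 - b^2 - θ*(2*q - 1)) / (2*(a - b))))

/-- The social welfare function. -/
noncomputable def Wfull (θ a b q : ℝ) : ℝ :=
  (∫ i in (0:ℝ)..(jhat θ a b q), (θ*q - (i - a)^2)) +
  (∫ i in (jhat θ a b q)..(1:ℝ), (θ*(1-q) - (i - b)^2))

noncomputable def splitWelfare (θ a b q j : ℝ) : ℝ :=
  (∫ i in (0:ℝ)..j, (θ*q - (i - a)^2)) + (∫ i in j..(1:ℝ), (θ*(1-q) - (i - b)^2))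

lemma integral_const_sub_sq (c d u v : ℝ) :
    ∫ x in u..v, (c - (x - d)^2) = c*(v - u) - ((v - d)^3 - (u - d)^3)/3 := by
  have hsq : ∫ x in u..v, (x - d)^2 = ((v - d)^3 - (u - d)^3)/3 := by
    rw [integral_comp_sub_right (fun x => x^2) d, integral_pow]
    ring
  rw [integral_sub intervalIntegrable_const
    ((by fun_prop : Continuous fun x => (x - d)^2).intervalIntegrable u v), hsq, intervalIntegral.integral_const, smul_eq_mul]
  ring

lemma splitWelfare_eq (θ a b q j : ℝ) :
    splitWelfare θ a b q j =
      θ*q*j - ((j - a)^3 + a^3)/3 + (θ*(1-q)*(1-j) - ((1 - b)^3 - (j - b)^3)/3) := by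
  rw [splitWelfare, integral_const_sub_sq, integral_const_sub_sq]
  ring

lemma Wfull_eq_splitWelfare (θ a b q : ℝ) : Wfull θ a b q = splitWelfare θ a b q (jhat θ a b q) :=
  rfl

lemma splitWelfare_sub_splitWelfare (θ a b q j k : ℝ) :
    splitWelfare θ a b q k - splitWelfare θ a b q j =
      (j - k) * (a^2 - b^2 - θ*(2*q - 1) + (b - a)*(j + k)) := by
  rw [splitWelfare_eq, splitWelfare_eq]
  ring

/-- The clip of `c` to `[0, 1]` maximizes over `[0, 1]` every concave quadratic with vertex `c`. -/
lemma sub_clip_mul_add_clip_sub_nonneg (c j : ℝ) (hj : j ∈ Set.Icc (0:ℝ) 1) :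
    0 ≤ (j - min 1 (max 0 c)) * (j + min 1 (max 0 c) - 2*c) := by
  obtain ⟨hj0, hj1⟩ := hj
  rcases le_total c 0 with hc | hc
  · rw [max_eq_left hc, min_eq_right zero_le_one]
    nlinarith
  rcases le_total 1 c with hc' | hc'
  · rw [max_eq_right hc, min_eq_left hc']
    nlinarith
  · rw [max_eq_right hc, min_eq_right hc']
    nlinarith [sq_nonneg (j - c)]

lemma splitWelfare_le_Wfull (θ a b q j : ℝ) (hab : a < b) (hj : j ∈ Set.Icc (0:ℝ) 1) :
    splitWelfare θ a b q j ≤ Wfull θ a b q := by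
  set c := (a^2 - b^2 - θ*(2*q - 1)) / (2*(a - b)) with hc
  have hjhat : jhat θ a b q = min 1 (max 0 c) := by simp only [jhat, hab.ne, if_false, hc]
  have hs : a^2 - b^2 - θ*(2*q - 1) = -2*(b - a)*c := by
    rw [hc]
    field_simp [sub_ne_zero.mpr hab.ne]
    ring
  have hdiff := splitWelfare_sub_splitWelfare θ a b q j (min 1 (max 0 c))
  rw [hs] at hdiff
  rw [Wfull_eq_splitWelfare, hjhat]
  nlinarith [mul_nonneg (sub_nonneg.mpr hab.le) (sub_clip_mul_add_clip_sub_nonneg c j hj)]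

lemma ne_of_jhat_mem_Ioo {θ a b q : ℝ} (hj : jhat θ a b q ∈ Set.Ioo (0:ℝ) 1) : a ≠ b := by
  rintro rfl
  simp only [jhat, if_true] at hj
  split_ifs at hj <;> simp at hj

lemma splitWelfare_lt_of_pos_left {θ a b q j : ℝ} (ha : 0 < a) (haj : a < j) :
    splitWelfare θ 0 b q j < splitWelfare θ a b q j := by
  rw [splitWelfare_eq, splitWelfare_eq]
  nlinarith [mul_pos (mul_pos ha (ha.trans haj)) (sub_pos.mpr haj)]

lemma splitWelfare_lt_of_lt_one_right {θ a b q j : ℝ} (hjb : j < b) (hb : b < 1) :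
    splitWelfare θ a 1 q j < splitWelfare θ a b q j := by
  rw [splitWelfare_eq, splitWelfare_eq]
  nlinarith [mul_pos (mul_pos (sub_pos.mpr hb) (sub_pos.mpr (hjb.trans hb))) (sub_pos.mpr hjb)]

theorem interior_optimum_slack_constraints_general
    (θ a' b' q' : ℝ)
    (ha : 0 ≤ a') (hab : a' ≤ b') (hb : b' ≤ 1) (hq : q' ∈ Set.Icc (0:ℝ) 1)
    (hopt : ∀ a b q : ℝ, 0 ≤ a → a ≤ b → b ≤ 1 → q ∈ Set.Icc (0:ℝ) 1 →
      Wfull θ a b q ≤ Wfull θ a' b' q')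
    (hj : jhat θ a' b' q' ∈ Set.Ioo (0:ℝ) 1) :
    0 < a' ∧ b' < 1 ∧ a' < b' := by
  have hlt : a' < b' := hab.lt_of_ne (ne_of_jhat_mem_Ioo hj)
  set j := jhat θ a' b' q'
  obtain ⟨hj0, hj1⟩ := hj
  have hsplit : ∀ a b, 0 ≤ a → a < b → b ≤ 1 →
      splitWelfare θ a b q' j ≤ splitWelfare θ a' b' q' j := fun a b ha hab hb =>
    (splitWelfare_le_Wfull θ a b q' j hab ⟨hj0.le, hj1.le⟩).trans (hopt a b q' ha hab.le hb hq)
  refine ⟨?_, ?_, hlt⟩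
  · by_contra! ha0
    obtain rfl : a' = 0 := le_antisymm ha0 ha
    have hpos : 0 < min (j/2) (b'/2) := lt_min (by linarith) (by linarith)
    have hmove := hsplit (min (j/2) (b'/2)) b' hpos.le
      ((min_le_right _ _).trans_lt (by linarith)) hb
    exact hmove.not_gt (splitWelfare_lt_of_pos_left hpos ((min_le_left _ _).trans_lt (by linarith)))
  · by_contra! hb1
    obtain rfl : b' = 1 := le_antisymm hb hb1
    have hlt1 : max ((1 + j)/2) ((1 + a')/2) < 1 := max_lt (by linarith) (by linarith)
    have hmove := hsplit a' (max ((1 + j)/2) ((1 + a')/2)) ha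
      ((by linarith : a' < (1 + a')/2).trans_le (le_max_right _ _)) hlt1.le
    exact hmove.not_gt
      (splitWelfare_lt_of_lt_one_right ((by linarith : j < (1 + j)/2).trans_le (le_max_left _ _)) hlt1)

/-- At a social optimum with interior indifferent individual, the binding
constraints a ≥ 0, b ≤ 1, a ≤ b are all slack: a* > 0, b* < 1, a* < b*. -/
theorem interior_optimum_slack_constraints
    (θ a' b' q' : ℝ) (hθ : 0 < θ)
    (ha : 0 ≤ a') (hab : a' ≤ b') (hb : b' ≤ 1) (hq : q' ∈ Set.Icc (0:ℝ) 1)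
    (hopt : ∀ a b q : ℝ, 0 ≤ a → a ≤ b → b ≤ 1 → q ∈ Set.Icc (0:ℝ) 1 →
      Wfull θ a b q ≤ Wfull θ a' b' q')
    (hj : jhat θ a' b' q' ∈ Set.Ioo (0:ℝ) 1) :
    0 < a' ∧ b' < 1 ∧ a' < b' :=
  interior_optimum_slack_constraints_general θ a' b' q' ha hab hb hq hopt hj
end

section
/- For a < b with a, b ∈ [0,1], θ > 0, and midpoint indifferent individual: the system ∂W/∂a = 0, ∂W/∂b = 0, θ(θ(1−2q)/(a−b) + a + b − 1) = 0 with 0 < a < b < 1 and q ∈ (0,1) has the unique solution (a,b,q) = (1/4, 3/4, 1/2). -/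
/-- The interior first-order conditions ∂W/∂a = 0, ∂W/∂b = 0, ∂W/∂q = 0 with
0 < a < b < 1, q ∈ (0,1) have the unique solution (1/4, 3/4, 1/2). -/
theorem interior_foc_unique_solution (θ a b q : ℝ) (hθ : 0 < θ)
    (ha : 0 < a) (hab : a < b) (hb : b < 1) (hq : q ∈ Set.Ioo (0:ℝ) 1)
    (h1 : -((a^2 - b^2 - θ*(2*q-1)) * (3*a^2 - 4*a*b + b^2 + θ*(2*q-1))) /
        (4*(a-b)^2) = 0)
    (h2 : -(((a-2)*a - (b-2)*b - θ*(2*q-1)) *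
        (a^2 + a*(2 - 4*b) + b*(3*b - 2) - θ*(2*q-1))) / (4*(a-b)^2) = 0)
    (h3 : θ * (θ*(1 - 2*q)/(a - b) + a + b - 1) = 0) :
    a = 1/4 ∧ b = 3/4 ∧ q = 1/2 := by
  have hne : a - b ≠ 0 := sub_ne_zero.mpr (ne_of_lt hab)
  have hθne : θ ≠ 0 := ne_of_gt hθ
  have hd : (4*(a-b)^2) ≠ 0 := by positivity
  have h1' : (a^2 - b^2 - θ*(2*q-1)) * (3*a^2 - 4*a*b + b^2 + θ*(2*q-1)) = 0 := by
    have := (div_eq_zero_iff.mp h1).resolve_right hd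
    linarith [this]
  have h2' : ((a-2)*a - (b-2)*b - θ*(2*q-1)) *
      (a^2 + a*(2 - 4*b) + b*(3*b - 2) - θ*(2*q-1)) = 0 := by
    have := (div_eq_zero_iff.mp h2).resolve_right hd
    linarith [this]
  have h3' : θ*(1 - 2*q)/(a - b) + a + b - 1 = 0 :=
    (mul_eq_zero.mp h3).resolve_left hθne
  have ht : θ*(2*q-1) = (a-b)*(a+b-1) := by
    field_simp at h3'
    linarith [h3']
  rw [ht] at h1' h2'
  have ha4 : (a-b)^2 * (4*a - 1) = 0 := by linear_combination h1'
  have hane : (a-b)^2 ≠ 0 := pow_ne_zero 2 hne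
  have haa : a = 1/4 := by
    have := (mul_eq_zero.mp ha4).resolve_left hane
    linarith
  have hb4 : (a-b)^2 * (4*b - 3) = 0 := by linear_combination h2'
  have hbb : b = 3/4 := by
    have := (mul_eq_zero.mp hb4).resolve_left hane
    linarith
  refine ⟨haa, hbb, ?_⟩
  rw [haa, hbb] at ht
  have : θ * (2*q - 1) = 0 := by linarith [ht]
  have := (mul_eq_zero.mp this).resolve_left hθne
  linarith
end

section
/- For θ ∈ (0, 1/4), the maximum of W(a, b, 0) = θ − b² + b − 1/3 − (a² − b² + θ)²/(4(a−b)) over 0 ≤ a < b ≤ 1 (with indifferent individual in [0,1]) is attained at (a,b) = (1/4 − θ, 3/4 − θ). -/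
/-!
If `x` is the individual indifferent between the two facilities, the welfare is `θ (1 - x)` minus
the quadratic travel costs of serving `[0, x]` from `a` and `[x, 1]` from `b`. Each cost is at least
the one obtained by placing the facility at the midpoint of its market area, which bounds the
welfare by a concave quadratic in `x` alone. That quadratic peaks at `x = 1/2 - 2θ`, where the
midpoint locations are exactly `a = 1/4 - θ` and `b = 3/4 - θ`.
-/

noncomputable section

def welfare (θ a b : ℝ) : ℝ := θ - b^2 + b - 1/3 - (a^2 - b^2 + θ)^2 / (4*(a-b))

/-- Solves `-(x - a)^2 = θ - (x - b)^2`. -/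
def indifferent (θ a b : ℝ) : ℝ := (a^2 - b^2 + θ) / (2*(a - b))

/-- `∫ i in 0..x, (i - a)^2`; by the reflection `i ↦ 1 - i`, serving `[x, 1]` from `b` costs
`travelCost (1 - b) (1 - x)`. -/
def travelCost (a x : ℝ) : ℝ := ((x - a)^3 + a^3) / 3

def midpointWelfare (θ x : ℝ) : ℝ := θ * (1 - x) - (x^3 + (1 - x)^3) / 12

theorem cube_div_twelve_le_travelCost {x : ℝ} (hx : 0 ≤ x) (a : ℝ) :
    x^3 / 12 ≤ travelCost a x := by
  have h : travelCost a x - x^3 / 12 = x * (a - x/2)^2 := by unfold travelCost; ring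
  rw [← sub_nonneg, h]
  exact mul_nonneg hx (sq_nonneg _)

theorem welfare_eq {θ a b : ℝ} (hab : a ≠ b) :
    welfare θ a b = θ * (1 - indifferent θ a b) - travelCost a (indifferent θ a b)
      - travelCost (1 - b) (1 - indifferent θ a b) := by
  have : a - b ≠ 0 := sub_ne_zero.mpr hab
  unfold welfare indifferent travelCost
  field_simp
  ring

theorem welfare_le_midpointWelfare {θ a b : ℝ} (hab : a ≠ b)
    (hx : indifferent θ a b ∈ Set.Icc (0:ℝ) 1) :
    welfare θ a b ≤ midpointWelfare θ (indifferent θ a b) := by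
  obtain ⟨hx0, hx1⟩ := hx
  have hleft := cube_div_twelve_le_travelCost hx0 a
  have hright := cube_div_twelve_le_travelCost (sub_nonneg.mpr hx1) (1 - b)
  rw [welfare_eq hab, midpointWelfare]
  linarith

theorem midpointWelfare_le (θ x : ℝ) :
    midpointWelfare θ x ≤ midpointWelfare θ (1/2 - 2*θ) := by
  have h : midpointWelfare θ (1/2 - 2*θ) - midpointWelfare θ x = (x - (1/2 - 2*θ))^2 / 4 := by
    unfold midpointWelfare; ring
  rw [← sub_nonneg, h]
  positivity

theorem welfare_optimum (θ : ℝ) :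
    welfare θ (1/4 - θ) (3/4 - θ) = midpointWelfare θ (1/2 - 2*θ) := by
  unfold welfare midpointWelfare
  ring

end

theorem optimum_at_quality_zero_general (θ : ℝ) :
    ∀ a b : ℝ, 0 ≤ a → a < b → b ≤ 1 →
      (a^2 - b^2 + θ) / (2*(a - b)) ∈ Set.Icc (0:ℝ) 1 →
      θ - b^2 + b - 1/3 - (a^2 - b^2 + θ)^2 / (4*(a-b)) ≤
      θ - (3/4 - θ)^2 + (3/4 - θ) - 1/3 -
        ((1/4 - θ)^2 - (3/4 - θ)^2 + θ)^2 / (4*((1/4 - θ) - (3/4 - θ))) := by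
  intro a b _ hab _ hx
  calc welfare θ a b
      ≤ midpointWelfare θ (indifferent θ a b) := welfare_le_midpointWelfare hab.ne hx
    _ ≤ midpointWelfare θ (1/2 - 2*θ) := midpointWelfare_le θ _
    _ = welfare θ (1/4 - θ) (3/4 - θ) := (welfare_optimum θ).symm

/-- For θ ∈ (0,1/4), W(a,b,0) = θ − b² + b − 1/3 − (a²−b²+θ)²/(4(a−b)) over
0 ≤ a < b ≤ 1 (with indifferent individual in [0,1]) attains its maximum at
(a,b) = (1/4−θ, 3/4−θ). -/
theorem optimum_at_quality_zero (θ : ℝ) (hθ : θ ∈ Set.Ioo (0:ℝ) (1/4)) :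
    ∀ a b : ℝ, 0 ≤ a → a < b → b ≤ 1 →
      (a^2 - b^2 + θ) / (2*(a - b)) ∈ Set.Icc (0:ℝ) 1 →
      θ - b^2 + b - 1/3 - (a^2 - b^2 + θ)^2 / (4*(a-b)) ≤
      θ - (3/4 - θ)^2 + (3/4 - θ) - 1/3 -
        ((1/4 - θ)^2 - (3/4 - θ)^2 + θ)^2 / (4*((1/4 - θ) - (3/4 - θ))) :=
  optimum_at_quality_zero_general θ
end
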